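/- For every integer n ≥ 3, the independence number of the square of T_{4,n} = C_4 □ C_n satisfies α(T_{4,n}²) ≤ ⌊2n/3⌋. -/

import Mathlib

open SimpleGraph

/-- The square of a simple graph `G`: distinct vertices are adjacent iff they are
adjacent in `G` or have a common neighbor in `G` (i.e. are at distance at most 2). -/
def SimpleGraph.square {V : Type*} (G : SimpleGraph V) : SimpleGraph V where
  Adj u v := u ≠ v ∧ (G.Adj u v ∨ ∃ w, G.Adj u w ∧ G.Adj w v)
  symm := ⟨fun u v => by
    rintro ⟨h, h' | ⟨w, hw1, hw2⟩⟩
    exacts [⟨h.symm, Or.inl h'.symm⟩, ⟨h.symm, Or.inr ⟨w, hw2.symm, hw1.symm⟩⟩]⟩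
  loopless := ⟨fun v => by simp⟩

/-- The toroidal grid `T_{m,n} = C_m □ C_n`. -/
def toroidalGrid (m n : ℕ) : SimpleGraph (Fin m × Fin n) :=
  SimpleGraph.cycleGraph m □ SimpleGraph.cycleGraph n

/-- The independence number of a graph: the maximum size of an independent set,
i.e. the clique number of the complement graph. -/
noncomputable def SimpleGraph.indepNum' {V : Type*} (G : SimpleGraph V) : ℕ :=
  Gᶜ.cliqueNum

/-!
Since `C₄` has diameter two, every column `C₄ × {j}` of `T_{4,n}` is a clique in the square, so an
independent set `S` of `T_{4,n}²` meets each column at most once and `|S|` is the number `|J|` of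
columns it occupies. Two elements of `S` in adjacent columns must lie in antipodal rows, so if three
consecutive columns `j, j + 1, j + 2` were occupied, the elements in columns `j` and `j + 2` would lie
in the same row, at distance two. Hence every window of three consecutive columns of `ℤ/n` contains
at most two columns of `J`, and summing over the `n` windows gives `3 |J| ≤ 2 n`.
-/

open Finset

theorem Finset.three_mul_card_le_of_no_three_consecutive {G : Type*} [AddGroup G] [Fintype G]
    [DecidableEq G] (s : Finset G) (g : G) (hs : ∀ x ∈ s, x + g ∈ s → x + g + g ∉ s) :
    3 * #s ≤ 2 * Fintype.card G := by
  set f : G → ℕ := fun x => if x ∈ s then 1 else 0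
  have sum_shift : ∀ c, ∑ x, f (x + c) = #s := fun c =>
    (Equiv.sum_comp (Equiv.addRight c) f).trans (by simp [f])
  have window_le : ∀ x, f x + f (x + g) + f (x + g + g) ≤ 2 := by
    intro x
    have := hs x
    simp only [f]
    split_ifs <;> simp_all
  calc 3 * #s = ∑ x, (f (x + 0) + f (x + g) + f (x + (g + g))) := by
        simp only [sum_add_distrib, sum_shift]; ring
    _ ≤ ∑ _x : G, 2 := sum_le_sum fun x _ => by simpa [add_assoc] using window_le x
    _ = 2 * Fintype.card G := by simp [mul_comm]

theorem Fin.ne_add_one_add_one {k : ℕ} (j : Fin (k + 3)) : j ≠ j + 1 + 1 := by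
  simp [add_assoc, Fin.ext_iff, Fin.val_add, Nat.mod_eq_of_lt (show 2 < k + 3 by omega)]

namespace SimpleGraph

variable {V W : Type*} {G : SimpleGraph V} {H : SimpleGraph W}

theorem square_adj_of_adj {u v : V} (h : G.Adj u v) : G.square.Adj u v :=
  ⟨h.ne, Or.inl h⟩

theorem square_adj_of_adj_of_adj {u w v : V} (huw : G.Adj u w) (hwv : G.Adj w v) (huv : u ≠ v) :
    G.square.Adj u v :=
  ⟨huv, Or.inr ⟨w, huw, hwv⟩⟩

theorem Embedding.map_square_adj {G' : SimpleGraph W} (f : G ↪g G') {u v : V}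
    (h : G.square.Adj u v) : G'.square.Adj (f u) (f v) := by
  obtain ⟨huv, huv' | ⟨w, huw, hwv⟩⟩ := h
  · exact square_adj_of_adj (f.map_adj_iff.mpr huv')
  · exact square_adj_of_adj_of_adj (f.map_adj_iff.mpr huw) (f.map_adj_iff.mpr hwv)
      (f.injective.ne huv)

theorem boxProd_square_adj_of_adj_of_adj {a b : V} {x y : W} (hab : G.Adj a b) (hxy : H.Adj x y) :
    (G □ H).square.Adj (a, x) (b, y) :=
  square_adj_of_adj_of_adj (w := (b, x)) (boxProd_adj_left.mpr hab) (boxProd_adj_right.mpr hxy)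
    (by simp [hab.ne])

theorem IsIndepSet.not_square_adj {s : Set V} (hs : G.square.IsIndepSet s) {u v : V} (hu : u ∈ s)
    (hv : v ∈ s) : ¬G.square.Adj u v :=
  fun h => hs hu hv h.ne h

theorem IsIndepSet.injOn_snd_of_square_eq_top (hG : G.square = ⊤) {s : Set (V × W)}
    (hs : (G □ H).square.IsIndepSet s) : s.InjOn Prod.snd := by
  rintro ⟨a, x⟩ hu ⟨b, y⟩ hv (rfl : x = y)
  by_contra hne
  have hab : a ≠ b := fun h => hne (by rw [h])
  exact hs.not_square_adj hu hv <|
    (boxProdLeft G H x).map_square_adj (by simpa [hG] using hab)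

theorem cycleGraph_adj_add_one {k : ℕ} (j : Fin (k + 2)) : (cycleGraph (k + 2)).Adj j (j + 1) := by
  simp [cycleGraph_adj]

theorem square_cycleGraph_four : (cycleGraph 4).square = ⊤ := by
  ext a b
  simp only [square, top_adj]
  revert a b
  decide

theorem eq_add_two_of_not_square_adj {a b : Fin 4} {x y : W} (hxy : H.Adj x y)
    (h : ¬(cycleGraph 4 □ H).square.Adj (a, x) (b, y)) : b = a + 2 := by
  have : ∀ a b : Fin 4, a = b ∨ (cycleGraph 4).Adj a b ∨ b = a + 2 := by decide
  rcases this a b with rfl | hab | hab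
  · exact absurd (square_adj_of_adj (boxProd_adj_right.mpr hxy)) h
  · exact absurd (boxProd_square_adj_of_adj_of_adj hab hxy) h
  · exact hab

theorem IsIndepSet.notMem_image_snd_of_adj_of_adj [DecidableEq W] {s : Finset (Fin 4 × W)}
    (hs : (cycleGraph 4 □ H).square.IsIndepSet s) {x y z : W} (hxy : H.Adj x y) (hyz : H.Adj y z)
    (hxz : x ≠ z) (hx : x ∈ s.image Prod.snd) (hy : y ∈ s.image Prod.snd) :
    z ∉ s.image Prod.snd := by
  simp only [mem_image] at hx hy ⊢
  rintro ⟨⟨c, z⟩, hw, rfl⟩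
  obtain ⟨⟨a, x⟩, hu, rfl⟩ := hx
  obtain ⟨⟨b, y⟩, hv, rfl⟩ := hy
  have hb : b = a + 2 := eq_add_two_of_not_square_adj hxy (hs.not_square_adj hu hv)
  have hc : c = b + 2 := eq_add_two_of_not_square_adj hyz (hs.not_square_adj hv hw)
  have hca : c = a := by rw [hc, hb]; exact (by decide : ∀ a : Fin 4, a + 2 + 2 = a) a
  subst hca
  exact hs.not_square_adj hu hw <|
    square_adj_of_adj_of_adj (boxProd_adj_right.mpr hxy) (boxProd_adj_right.mpr hyz) (by simp [hxz])

end SimpleGraph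

theorem stmt14 (n : ℕ) (hn : 3 ≤ n) :
    (toroidalGrid 4 n).square.indepNum' ≤ 2 * n / 3 := by
  obtain ⟨k, rfl⟩ : ∃ k, n = k + 3 := ⟨n - 3, by omega⟩
  classical
  obtain ⟨s, hs⟩ := (toroidalGrid 4 (k + 3)).square.exists_isNIndepSet_indepNum
  have hcard := (s.image Prod.snd).three_mul_card_le_of_no_three_consecutive 1
    fun j hj hj₁ => hs.isIndepSet.notMem_image_snd_of_adj_of_adj (cycleGraph_adj_add_one j)
      (cycleGraph_adj_add_one (j + 1)) j.ne_add_one_add_one hj hj₁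
  rw [card_image_of_injOn (hs.isIndepSet.injOn_snd_of_square_eq_top square_cycleGraph_four),
    hs.card_eq, Fintype.card_fin] at hcard
  rw [indepNum', cliqueNum_compl]
  omega
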